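/- arXiv:2601.07044 — 3 statements merged into one kernel-verified Lean document; each statement's English description precedes it below -/
import Mathlib

section
/- Let ξ_1,...,ξ_N be conditionally independent Bernoulli given a latent index S ∈ {0,...,N}, with P(ξ_j = 1 | S = l) = 1-q for j ≤ l and = p for j > l, and prior π_l = P(S = l) > 0. If p + q ≠ 1, then the map from the prior (π_0,...,π_N) to the distribution of (ξ_1,...,ξ_N) is injective: distinct priors yield distinct marginal distributions of the diagnosis vector. -/
/-!
Weighting `ξ` by `t ^ |ξ|` and summing turns the likelihood `L(·; l)` into
`(q + (1 - q) t) ^ l (1 - p + p t) ^ (N - l)`. A vanishing combination `∑ w_l L(·; l)` therefore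
makes the polynomial `∑ w_l X ^ l` vanish at `(q + (1 - q) t) / (1 - p + p t)` for every `t`.
This Möbius map has determinant `q p - (1 - q)(1 - p) = p + q - 1 ≠ 0`, so it is injective and
the polynomial has infinitely many roots; hence `w = 0`.
-/

/-- The conditional probability of the diagnosis vector `ξ` given that the latent onset
index is `l`: `∏_{j ≤ l} q^{1-ξ_j}(1-q)^{ξ_j} · ∏_{j > l} p^{ξ_j}(1-p)^{1-ξ_j}`. -/
noncomputable def diagLik {N : ℕ} (p q : ℝ) (ξ : Fin N → Bool) (l : ℕ) : ℝ :=
  ∏ j : Fin N,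
    (if (j : ℕ) + 1 ≤ l then (if ξ j then 1 - q else q)
     else (if ξ j then p else 1 - p))

open Finset Polynomial

theorem Fin.prod_ite_val_lt {M : Type*} [CommMonoid M] {N l : ℕ} (hl : l ≤ N) (x y : M) :
    ∏ j : Fin N, (if (j : ℕ) < l then x else y) = x ^ l * y ^ (N - l) := by
  rw [Fin.prod_univ_eq_prod_range (fun j => if j < l then x else y),
    ← prod_range_mul_prod_Ico _ hl, prod_congr rfl fun j hj => if_pos (mem_range.mp hj),
    prod_congr rfl fun j hj => if_neg (mem_Ico.mp hj).1.not_gt]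
  simp

theorem sum_diagLik_mul_prod {N l : ℕ} (hl : l ≤ N) (p q t : ℝ) :
    ∑ ξ : Fin N → Bool, diagLik p q ξ l * ∏ j, (if ξ j then t else 1) =
      (q + (1 - q) * t) ^ l * (1 - p + p * t) ^ (N - l) := by
  have hfactor (j : ℕ) :
      ∑ b : Bool, (if j + 1 ≤ l then (if b then 1 - q else q) else (if b then p else 1 - p)) *
          (if b then t else 1) =
        if j < l then q + (1 - q) * t else 1 - p + p * t := by
    by_cases h : j < l <;> simp [h] <;> ring
  simp_rw [← Fin.prod_ite_val_lt hl, ← hfactor, Fintype.prod_sum, diagLik, prod_mul_distrib]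

variable {K : Type*} [Field K]

theorem subsingleton_setOf_add_mul_eq_zero {c d : K} (hcd : (c, d) ≠ 0) :
    {t : K | c + d * t = 0}.Subsingleton := by
  intro t ht s hs
  simp only [Set.mem_ofPred_eq] at ht hs
  by_contra hne
  have hd : d = 0 := by
    have : d * (t - s) = 0 := by linear_combination ht - hs
    simpa [sub_ne_zero.mpr hne] using this
  subst hd
  simp_all

theorem injOn_div_of_det_ne_zero {a b c d : K} (hdet : a * d - b * c ≠ 0) :
    Set.InjOn (fun t => (a + b * t) / (c + d * t)) {t | c + d * t ≠ 0} := by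
  intro t ht s hs h
  simp only [Set.mem_ofPred_eq] at ht hs h
  rw [div_eq_div_iff ht hs] at h
  have : (a * d - b * c) * (s - t) = 0 := by linear_combination h
  simpa [hdet, sub_eq_zero, eq_comm] using this

theorem eq_zero_of_forall_sum_mul_pow_mul_pow_eq_zero [Infinite K] {N : ℕ} {a b c d : K}
    (hdet : a * d - b * c ≠ 0) (w : Fin (N + 1) → K)
    (h : ∀ t, ∑ l : Fin (N + 1), w l * ((a + b * t) ^ (l : ℕ) * (c + d * t) ^ (N - l)) = 0) :
    w = 0 := by
  set Q : K[X] := ∑ l : Fin (N + 1), C (w l) * X ^ (l : ℕ)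
  have hroot : ∀ t, c + d * t ≠ 0 → Q.IsRoot ((a + b * t) / (c + d * t)) := by
    intro t ht
    have : Q.eval ((a + b * t) / (c + d * t)) * (c + d * t) ^ N = 0 := by
      simp only [Q, eval_finsetSum, eval_mul, eval_C, eval_pow, eval_X, sum_mul]
      rw [← h t]
      refine sum_congr rfl fun l _ => ?_
      rw [div_pow, ← pow_mul_pow_sub _ (Nat.lt_succ_iff.mp l.isLt), mul_assoc,
        ← mul_assoc (_ / _), div_mul_cancel₀ _ (pow_ne_zero _ ht)]
    simpa [IsRoot, ht] using this
  have hcd : (c, d) ≠ 0 := by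
    rintro ⟨⟩
    simp at hdet
  have hQ : Q = 0 := by
    refine eq_zero_of_infinite_isRoot Q (Set.Infinite.mono ?_
      (((subsingleton_setOf_add_mul_eq_zero hcd).finite.infinite_compl).image
        (injOn_div_of_det_ne_zero hdet)))
    rintro _ ⟨t, ht, rfl⟩
    exact hroot t ht
  ext k
  simpa [Q, finsetSum_coeff, coeff_X_pow, Fin.val_inj] using congrArg (coeff · k) hQ

theorem linearIndependent_diagLik {N : ℕ} {p q : ℝ} (hpq : p + q ≠ 1) :
    LinearIndependent ℝ fun (l : Fin (N + 1)) (ξ : Fin N → Bool) => diagLik p q ξ l := by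
  rw [Fintype.linearIndependent_iff]
  intro w hw
  have hgen (t : ℝ) :
      ∑ l : Fin (N + 1),
        w l * ((q + (1 - q) * t) ^ (l : ℕ) * (1 - p + p * t) ^ (N - l)) = 0 := by
    simp_rw [← sum_diagLik_mul_prod (Nat.lt_succ_iff.mp (Fin.isLt _)), mul_sum]
    rw [sum_comm]
    refine sum_eq_zero fun ξ _ => ?_
    have hξ : ∑ l : Fin (N + 1), w l * diagLik p q ξ l = 0 := by simpa using congrFun hw ξ
    simp_rw [← mul_assoc, ← sum_mul, hξ, zero_mul]
  have hdet : q * p - (1 - q) * (1 - p) ≠ 0 := by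
    contrapose! hpq
    linear_combination hpq
  exact congrFun (eq_zero_of_forall_sum_mul_pow_mul_pow_eq_zero hdet w hgen)

theorem stmt15_general (N : ℕ) (p q : ℝ) (hpq : p + q ≠ 1)
    (pr pr' : Fin (N + 1) → ℝ)
    (hmarg : ∀ ξ : Fin N → Bool,
      ∑ l : Fin (N + 1), pr l * diagLik p q ξ (l : ℕ) =
        ∑ l : Fin (N + 1), pr' l * diagLik p q ξ (l : ℕ)) :
    pr = pr' :=
  funext <| Fintype.linearIndependent_iffₛ.mp (linearIndependent_diagLik hpq) pr pr'
    (funext fun ξ => by simpa using hmarg ξ)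

/-- Let `ξ_1,...,ξ_N` be conditionally independent Bernoulli given a latent
index `S ∈ {0,...,N}`, with `P(ξ_j = 1 | S = l) = 1-q` for `j ≤ l` and `= p` for `j > l`,
and prior `pr_l = P(S = l) > 0`.  If `p + q ≠ 1`, the map from the prior to the marginal
distribution `ξ ↦ Σ_l pr_l L(ξ; l)` of the diagnosis vector is injective. -/
theorem stmt15 (N : ℕ) (hN : 1 ≤ N) (p q : ℝ) (hp : 0 < p) (hp1 : p < 1)
    (hq : 0 < q) (hq1 : q < 1) (hpq : p + q ≠ 1)
    (pr pr' : Fin (N + 1) → ℝ) (hpr : ∀ l, 0 < pr l) (hpr' : ∀ l, 0 < pr' l)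
    (hpr1 : ∑ l, pr l = 1) (hpr1' : ∑ l, pr' l = 1)
    (hmarg : ∀ ξ : Fin N → Bool,
      ∑ l : Fin (N + 1), pr l * diagLik p q ξ (l : ℕ) =
        ∑ l : Fin (N + 1), pr' l * diagLik p q ξ (l : ℕ)) :
    pr = pr' :=
  stmt15_general N p q hpq pr pr' hmarg
end

section
/- Fix p, q ∈ (0,1) with p + q ≠ 1 and N ≥ 1. The N+1 functions f_l : {0,1}^N → ℝ defined by f_l(ξ) = ∏_{j≤l} q^{1-ξ_j}(1-q)^{ξ_j} ∏_{j>l} p^{ξ_j}(1-p)^{1-ξ_j}, l = 0,...,N, are linearly independent. -/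
open Real

lemma diagLik_eval (N : ℕ) (p q : ℝ) (k l : ℕ) (hk : k ≤ N) (hl : l ≤ N) :
    diagLik p q (fun j : Fin N => decide ((j : ℕ) < k)) l
      = (1-q)^(min l k) * q^(l - min l k) * p^(k - min l k) * (1-p)^(N - max l k) := by
  unfold diagLik
  have hstep : (∏ j : Fin N,
      (if (j : ℕ) + 1 ≤ l then (if (decide ((j : ℕ) < k) : Bool) then 1 - q else q)
       else (if (decide ((j : ℕ) < k) : Bool) then p else 1 - p)))
      = ∏ j ∈ Finset.range N,
        (if j < l then (if j < k then 1 - q else q) else (if j < k then p else 1 - p)) := by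
    rw [← Fin.prod_univ_eq_prod_range]
    apply Finset.prod_congr rfl
    intro j _
    simp [Nat.add_one_le_iff]
  rw [hstep]
  set f : ℕ → ℝ := fun j =>
    (if j < l then (if j < k then 1 - q else q) else (if j < k then p else 1 - p)) with hf
  have h1 : min l k ≤ l := Nat.min_le_left _ _
  have h2 : l ≤ max l k := Nat.le_max_left _ _
  have h3 : max l k ≤ N := max_le hl hk
  rw [Finset.range_eq_Ico,
    ← Finset.prod_Ico_consecutive f (Nat.zero_le (min l k)) ((h1.trans h2).trans h3),
    ← Finset.prod_Ico_consecutive f h1 (h2.trans h3),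
    ← Finset.prod_Ico_consecutive f h2 h3]
  have P1 : ∏ j ∈ Finset.Ico 0 (min l k), f j = (1-q)^(min l k) := by
    rw [Finset.prod_congr rfl (fun j hj => ?_), Finset.prod_const, Nat.card_Ico, Nat.sub_zero]
    rw [Finset.mem_Ico] at hj
    simp only [hf]
    rw [if_pos (by omega), if_pos (by omega)]
  have P2 : ∏ j ∈ Finset.Ico (min l k) l, f j = q^(l - min l k) := by
    rw [Finset.prod_congr rfl (fun j hj => ?_), Finset.prod_const, Nat.card_Ico]
    rw [Finset.mem_Ico] at hj
    simp only [hf]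
    rw [if_pos (by omega), if_neg (by omega)]
  have P3 : ∏ j ∈ Finset.Ico l (max l k), f j = p^(k - min l k) := by
    rw [Finset.prod_congr rfl (fun j hj => ?_), Finset.prod_const, Nat.card_Ico,
      show max l k - l = k - min l k by omega]
    rw [Finset.mem_Ico] at hj
    simp only [hf]
    rw [if_neg (by omega), if_pos (by omega)]
  have P4 : ∏ j ∈ Finset.Ico (max l k) N, f j = (1-p)^(N - max l k) := by
    rw [Finset.prod_congr rfl (fun j hj => ?_), Finset.prod_const, Nat.card_Ico]
    rw [Finset.mem_Ico] at hj
    simp only [hf]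
    rw [if_neg (by omega), if_neg (by omega)]
  rw [P1, P2, P3, P4]
  ring

/-- For `p, q ∈ (0,1)` with `p + q ≠ 1` and `N ≥ 1`, the `N + 1` functions
`f_l : {0,1}^N → ℝ`, `f_l ξ = ∏_{j≤l} q^{1-ξ_j}(1-q)^{ξ_j} ∏_{j>l} p^{ξ_j}(1-p)^{1-ξ_j}`,
`l = 0,...,N`, are linearly independent. -/
theorem stmt16 (N : ℕ) (hN : 1 ≤ N) (p q : ℝ) (hp : 0 < p) (hp1 : p < 1)
    (hq : 0 < q) (hq1 : q < 1) (hpq : p + q ≠ 1) :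
    LinearIndependent ℝ
      (fun l : Fin (N + 1) => (fun ξ : Fin N → Bool => diagLik p q ξ (l : ℕ))) := by
  have hp' : (0:ℝ) < 1 - p := by linarith
  have hq' : (0:ℝ) < 1 - q := by linarith
  have hpq' : (1:ℝ) - p - q ≠ 0 := by intro h; exact hpq (by linarith)
  rw [Fintype.linearIndependent_iff]
  intro g hg
  set v : ℕ → ℕ → ℝ := fun l k =>
    (1-q)^(min l k) * q^(l - min l k) * p^(k - min l k) * (1-p)^(N - max l k) with hv
  set c : ℕ → ℝ := fun l => if h : l < N + 1 then g ⟨l, h⟩ else 0 with hc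
  have hcg : ∀ i : Fin (N+1), c (i : ℕ) = g i := by
    intro i; simp only [hc]; rw [dif_pos i.isLt]
  have E : ∀ k, k ≤ N → ∑ l ∈ Finset.range (N+1), c l * v l k = 0 := by
    intro k hk
    have h1 := congrFun hg (fun j : Fin N => decide ((j : ℕ) < k))
    simp only [Finset.sum_apply, Pi.smul_apply, smul_eq_mul, Pi.zero_apply] at h1
    calc ∑ l ∈ Finset.range (N+1), c l * v l k
        = ∑ i : Fin (N+1), c (i : ℕ) * v (i : ℕ) k :=
          (Fin.sum_univ_eq_sum_range (fun l => c l * v l k) (N+1)).symm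
      _ = ∑ i : Fin (N+1), g i * diagLik p q (fun j : Fin N => decide ((j : ℕ) < k)) (i : ℕ) := by
          apply Finset.sum_congr rfl
          intro i _
          rw [hcg i, diagLik_eval N p q k (i : ℕ) hk (Nat.lt_succ_iff.mp i.isLt)]
      _ = 0 := h1
  have T : ∀ k, 1 ≤ k → k ≤ N →
      ∑ l ∈ Finset.Icc k N, c l * (q^(l-k) * (1-p)^(N-l)) = 0 := by
    intro k hk1 hkN
    have e1 := E k hkN
    have e2 := E (k-1) (by omega)
    have comb : ∑ l ∈ Finset.range (N+1), c l * ((1-p) * v l k - p * v l (k-1)) = 0 := by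
      have expand : ∑ l ∈ Finset.range (N+1), c l * ((1-p) * v l k - p * v l (k-1))
          = (1-p) * ∑ l ∈ Finset.range (N+1), c l * v l k
            - p * ∑ l ∈ Finset.range (N+1), c l * v l (k-1) := by
        rw [Finset.mul_sum, Finset.mul_sum, ← Finset.sum_sub_distrib]
        apply Finset.sum_congr rfl; intro l _; ring
      rw [expand, e1, e2]; ring
    have split : ∑ l ∈ Finset.range (N+1), c l * ((1-p) * v l k - p * v l (k-1))
        = ((1-q)^(k-1) * (1-p-q)) * ∑ l ∈ Finset.Icc k N, c l * (q^(l-k) * (1-p)^(N-l)) := by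
      rw [Finset.range_eq_Ico,
        ← Finset.sum_Ico_consecutive _ (Nat.zero_le k) (by omega : k ≤ N+1)]
      have hz : ∀ l ∈ Finset.Ico 0 k, c l * ((1-p) * v l k - p * v l (k-1)) = 0 := by
        intro l hl
        rw [Finset.mem_Ico] at hl
        have hmin1 : min l k = l := by omega
        have hmin2 : min l (k-1) = l := by omega
        have hmax1 : max l k = k := by omega
        have hmax2 : max l (k-1) = k-1 := by omega
        simp only [hv, hmin1, hmin2, hmax1, hmax2]
        rw [show l - l = 0 by omega, show k - l = (k-1-l) + 1 by omega,
          show N - (k-1) = (N-k) + 1 by omega, pow_succ, pow_succ, pow_zero]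
        ring
      rw [Finset.sum_eq_zero hz, zero_add, show Finset.Ico k (N+1) = Finset.Icc k N from
        Finset.Ico_add_one_right_eq_Icc k N, Finset.mul_sum]
      apply Finset.sum_congr rfl
      intro l hl
      rw [Finset.mem_Icc] at hl
      have hmin1 : min l k = k := by omega
      have hmin2 : min l (k-1) = k-1 := by omega
      have hmax1 : max l k = l := by omega
      have hmax2 : max l (k-1) = l := by omega
      simp only [hv, hmin1, hmin2, hmax1, hmax2]
      rw [show k - k = 0 by omega, show k - 1 - (k-1) = 0 by omega,
        show l - (k-1) = (l-k) + 1 by omega, pow_zero, pow_succ,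
        show (1-q)^k = (1-q)^(k-1) * (1-q) from by rw [← pow_succ]; congr 1; omega]
      ring
    rw [split] at comb
    rcases mul_eq_zero.mp comb with h | h
    · exact absurd h (mul_ne_zero (pow_ne_zero _ (ne_of_gt hq')) hpq')
    · exact h
  have step : ∀ k, 1 ≤ k → k ≤ N → (∀ l, k < l → l ≤ N → c l = 0) → c k = 0 := by
    intro k hk1 hkN hl
    have t := T k hk1 hkN
    have hsingle : ∑ l ∈ Finset.Icc k N, c l * (q^(l-k) * (1-p)^(N-l))
        = c k * (q^(k-k) * (1-p)^(N-k)) := by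
      apply Finset.sum_eq_single_of_mem k (Finset.mem_Icc.mpr ⟨le_refl k, hkN⟩)
      intro l hl' hne
      rw [Finset.mem_Icc] at hl'
      rw [hl l (lt_of_le_of_ne hl'.1 (Ne.symm hne)) hl'.2, zero_mul]
    rw [hsingle] at t
    have hne : q^(k-k) * (1-p)^(N-k) ≠ 0 :=
      mul_ne_zero (pow_ne_zero _ (ne_of_gt hq)) (pow_ne_zero _ (ne_of_gt hp'))
    exact (mul_eq_zero.mp t).resolve_right hne
  have hzero : ∀ d k, 1 ≤ k → k ≤ N → N - k ≤ d → c k = 0 := by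
    intro d
    induction d with
    | zero => intro k hk1 hkN hd; exact step k hk1 hkN (fun l h1 h2 => (by omega : False).elim)
    | succ d ih =>
        intro k hk1 hkN hd
        exact step k hk1 hkN (fun l h1 h2 => ih l (by omega) h2 (by omega))
  have hck : ∀ k, 1 ≤ k → k ≤ N → c k = 0 := fun k h1 h2 => hzero (N-k) k h1 h2 le_rfl
  have hc0 : c 0 = 0 := by
    have e0 := E 0 (Nat.zero_le N)
    have hsingle : ∑ l ∈ Finset.range (N+1), c l * v l 0 = c 0 * v 0 0 := by
      apply Finset.sum_eq_single_of_mem 0 (Finset.mem_range.mpr (by omega))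
      intro l hl hne
      rw [Finset.mem_range] at hl
      rw [hck l (by omega) (by omega), zero_mul]
    rw [hsingle] at e0
    have hv00 : v 0 0 = (1-p)^N := by simp [hv]
    rw [hv00] at e0
    exact (mul_eq_zero.mp e0).resolve_right (pow_ne_zero _ (ne_of_gt hp'))
  intro i
  rw [← hcg i]
  rcases Nat.eq_zero_or_pos (i : ℕ) with h | h
  · rw [h]; exact hc0
  · exact hck (i : ℕ) h (Nat.lt_succ_iff.mp i.isLt)
end

section
/- Let b ~ N(0, σ²) with σ² > 0 and let Λ > 0 be a constant, and let ψ(b; σ²) denote the N(0, σ²) density. Then the expectation E[exp(-Λ e^b)] = ∫ exp(-Λ e^b) ψ(b; σ²) db is finite and lies strictly in (0, 1), and its derivative with respect to σ² exists and is given by d/dσ² E[exp(-Λ e^b)] = (1/2) E[(b²/σ⁴ − 1/σ²) exp(-Λ e^b)]. -/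
open MeasureTheory Real

/-- The `N(0, s)` density as a function of the variance `s > 0`. -/
noncomputable def normalPDF (s b : ℝ) : ℝ :=
  (Real.sqrt (2 * Real.pi * s))⁻¹ * Real.exp (-(b ^ 2) / (2 * s))

lemma normalPDF_pos {s : ℝ} (hs : 0 < s) (b : ℝ) : 0 < normalPDF s b := by
  unfold normalPDF; positivity

lemma normalPDF_eq_gaussian {v : ℝ} (hv : 0 < v) :
    normalPDF v = ProbabilityTheory.gaussianPDFReal 0 ⟨v, hv.le⟩ := by
  funext b
  simp [normalPDF, ProbabilityTheory.gaussianPDFReal]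
  rfl

lemma integrable_normalPDF {v : ℝ} (hv : 0 < v) : Integrable (normalPDF v) := by
  rw [normalPDF_eq_gaussian hv]
  exact ProbabilityTheory.integrable_gaussianPDFReal 0 _

lemma integral_normalPDF {v : ℝ} (hv : 0 < v) : ∫ b, normalPDF v b = 1 := by
  rw [normalPDF_eq_gaussian hv]
  exact ProbabilityTheory.integral_gaussianPDFReal_eq_one 0
    (fun h => hv.ne' (congrArg NNReal.toReal h))

lemma continuous_normalPDF (s : ℝ) : Continuous (normalPDF s) := by
  unfold normalPDF; fun_prop

lemma hasDerivAt_normalPDF (b : ℝ) {s : ℝ} (hs : 0 < s) :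
    HasDerivAt (fun s => normalPDF s b) ((b ^ 2 / (2 * s ^ 2) - 1 / (2 * s)) * normalPDF s b) s := by
  have h2πs : 0 < 2 * π * s := by positivity
  have hrne : Real.sqrt (2 * π * s) ≠ 0 := by positivity
  have hr2 : Real.sqrt (2 * π * s) ^ 2 = 2 * π * s := Real.sq_sqrt h2πs.le
  have hinner : HasDerivAt (fun s : ℝ => 2 * π * s) (2 * π) s := by
    simpa using (hasDerivAt_id s).const_mul (2 * π)
  have hsq : HasDerivAt (fun s : ℝ => Real.sqrt (2 * π * s))
      (1 / (2 * Real.sqrt (2 * π * s)) * (2 * π)) s :=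
    (Real.hasDerivAt_sqrt h2πs.ne').comp s hinner
  have hinv := hsq.inv hrne
  have hg : HasDerivAt (fun s : ℝ => -(b ^ 2) / (2 * s)) (b ^ 2 / (2 * s ^ 2)) s := by
    have h := (hasDerivAt_inv hs.ne').const_mul (-(b ^ 2) / 2)
    have heq : (fun s : ℝ => -(b ^ 2) / 2 * s⁻¹) = fun s : ℝ => -(b ^ 2) / (2 * s) := by
      funext x; ring
    rw [heq] at h
    refine h.congr_deriv ?_
    ring
  have := hinv.mul hg.exp
  refine this.congr_deriv ?_
  unfold normalPDF
  simp only [Pi.inv_apply]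
  set r := Real.sqrt (2 * π * s) with hrdef
  rw [hr2]
  field_simp
  ring_nf

/-- weaker claim: For `σ² = v > 0` and `Λ > 0`, the marginal survival
probability `E[exp(-Λ e^b)] = ∫ exp(-Λ e^b) ψ(b; v) db` is finite and lies strictly in
`(0, 1)`, and its derivative in the variance `v` exists and equals
`(1/2) ∫ (b²/v² − 1/v) exp(-Λ e^b) ψ(b; v) db`. -/
theorem stmt18 (Λ v : ℝ) (hΛ : 0 < Λ) (hv : 0 < v) :
    Integrable (fun b => Real.exp (-(Λ * Real.exp b)) * normalPDF v b) ∧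
    (∫ b, Real.exp (-(Λ * Real.exp b)) * normalPDF v b) ∈ Set.Ioo (0 : ℝ) 1 ∧
    HasDerivAt (fun s => ∫ b, Real.exp (-(Λ * Real.exp b)) * normalPDF s b)
      ((1 / 2) * ∫ b, (b ^ 2 / v ^ 2 - 1 / v) * Real.exp (-(Λ * Real.exp b)) * normalPDF v b)
      v := by
  have hexple : ∀ b : ℝ, Real.exp (-(Λ * Real.exp b)) ≤ 1 := fun b => by
    rw [Real.exp_le_one_iff]
    have := mul_pos hΛ (Real.exp_pos b)
    linarith
  have hexppos : ∀ b : ℝ, 0 < Real.exp (-(Λ * Real.exp b)) := fun b => Real.exp_pos _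
  -- Integrability of F v
  have hcontF : ∀ s : ℝ, Continuous (fun b => Real.exp (-(Λ * Real.exp b)) * normalPDF s b) := by
    intro s
    exact (Real.continuous_exp.comp (by fun_prop)).mul (continuous_normalPDF s)
  have hFint : Integrable (fun b => Real.exp (-(Λ * Real.exp b)) * normalPDF v b) := by
    refine (integrable_normalPDF hv).mono' ((hcontF v).aestronglyMeasurable) ?_
    filter_upwards with b
    rw [Real.norm_eq_abs, abs_of_nonneg (mul_nonneg (Real.exp_nonneg _) (normalPDF_pos hv b).le)]
    calc Real.exp (-(Λ * Real.exp b)) * normalPDF v b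
        ≤ 1 * normalPDF v b := by
          exact mul_le_mul_of_nonneg_right (hexple b) (normalPDF_pos hv b).le
      _ = normalPDF v b := one_mul _
  refine ⟨hFint, ⟨?_, ?_⟩, ?_⟩
  · -- positivity
    rw [integral_pos_iff_support_of_nonneg
      (fun b => by
        have h := mul_nonneg (hexppos b).le (normalPDF_pos hv b).le
        simpa using h) hFint]
    have : Function.support (fun b => Real.exp (-(Λ * Real.exp b)) * normalPDF v b) = Set.univ := by
      ext b
      simp only [Function.mem_support, Set.mem_univ, iff_true]
      exact (mul_pos (hexppos b) (normalPDF_pos hv b)).ne'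
    rw [this]
    simp
  · -- < 1
    have hGint : Integrable (fun b => (1 - Real.exp (-(Λ * Real.exp b))) * normalPDF v b) := by
      have := ((integrable_normalPDF hv).sub hFint)
      refine this.congr (Filter.Eventually.of_forall fun b => ?_)
      simp only [Pi.sub_apply]; ring
    have hGpos : 0 < ∫ b, (1 - Real.exp (-(Λ * Real.exp b))) * normalPDF v b := by
      rw [integral_pos_iff_support_of_nonneg
        (fun b => by
          have h1 := hexple b
          have := normalPDF_pos hv b
          have hlt : Real.exp (-(Λ * Real.exp b)) < 1 := by
            rw [Real.exp_lt_one_iff]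
            have := mul_pos hΛ (Real.exp_pos b)
            linarith
          have h : (0:ℝ) ≤ (1 - Real.exp (-(Λ * Real.exp b))) * normalPDF v b := by nlinarith
          simpa using h) hGint]
      have : Function.support (fun b => (1 - Real.exp (-(Λ * Real.exp b))) * normalPDF v b) = Set.univ := by
        ext b
        simp only [Function.mem_support, Set.mem_univ, iff_true]
        have hlt : Real.exp (-(Λ * Real.exp b)) < 1 := by
          rw [Real.exp_lt_one_iff]
          have := mul_pos hΛ (Real.exp_pos b)
          linarith
        have := normalPDF_pos hv b
        exact (mul_pos (by linarith) this).ne'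
      rw [this]; simp
    have heq : ∫ b, (1 - Real.exp (-(Λ * Real.exp b))) * normalPDF v b
        = 1 - ∫ b, Real.exp (-(Λ * Real.exp b)) * normalPDF v b := by
      rw [show (fun b => (1 - Real.exp (-(Λ * Real.exp b))) * normalPDF v b)
          = fun b => normalPDF v b - Real.exp (-(Λ * Real.exp b)) * normalPDF v b by
        funext b; ring]
      rw [integral_sub (integrable_normalPDF hv) hFint, integral_normalPDF hv]
    linarith [heq ▸ hGpos]
  · -- derivative
    set K : ℝ := (Real.sqrt (2 * π * (v / 2)))⁻¹ with hK
    have hKpos : 0 < K := by rw [hK]; positivity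
    set F' : ℝ → ℝ → ℝ := fun s b =>
      (1 / 2) * ((b ^ 2 / s ^ 2 - 1 / s) * (Real.exp (-(Λ * Real.exp b)) * normalPDF s b)) with hF'
    set bound : ℝ → ℝ := fun b =>
      (b ^ 2 / (v / 2) ^ 2 + 1 / (v / 2)) * (K * Real.exp (-(1 / (3 * v)) * b ^ 2)) with hbound
    have hc3 : 0 < 1 / (3 * v) := by positivity
    have hball : ∀ s ∈ Metric.ball v (v / 2), v / 2 < s ∧ s < 3 * v / 2 := by
      intro s hs
      rw [Metric.mem_ball, Real.dist_eq, abs_lt] at hs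
      constructor <;> linarith [hs.1, hs.2]
    have key := hasDerivAt_integral_of_dominated_loc_of_deriv_le (μ := volume)
      (F := fun s b => Real.exp (-(Λ * Real.exp b)) * normalPDF s b) (F' := F')
      (x₀ := v) (s := Metric.ball v (v / 2)) (bound := bound) (Metric.ball_mem_nhds v (by positivity))
      (Filter.Eventually.of_forall fun s => (hcontF s).aestronglyMeasurable)
      hFint
      (by
        apply Continuous.aestronglyMeasurable
        exact continuous_const.mul ((((continuous_pow 2).div_const _).sub
          continuous_const).mul (hcontF v)))
      (Filter.Eventually.of_forall fun b => by
        intro s hs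
        obtain ⟨hs1, hs2⟩ := hball s hs
        have h0 : 0 < s := by linarith
        have hψpos := normalPDF_pos h0 b
        have hepos := hexppos b
        -- bound on the coefficient
        have hs3 : 1 / s ≤ 1 / (v / 2) := by
          apply one_div_le_one_div_of_le (by positivity) hs1.le
        have hspos : 0 < 1 / s := by positivity
        have hb2 : b ^ 2 / s ^ 2 ≤ b ^ 2 / (v / 2) ^ 2 := by
          apply div_le_div_of_nonneg_left (sq_nonneg b) (by positivity)
          exact pow_le_pow_left₀ (by positivity) hs1.le 2
        have hb2pos : 0 ≤ b ^ 2 / s ^ 2 := by positivity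
        have hvb2 : (0:ℝ) ≤ b ^ 2 / (v / 2) ^ 2 := by positivity
        have hvb3 : (0:ℝ) < 1 / (v / 2) := by positivity
        have h1 : |b ^ 2 / s ^ 2 - 1 / s| ≤ b ^ 2 / (v / 2) ^ 2 + 1 / (v / 2) := by
          rw [abs_le]
          constructor <;> linarith
        -- bound on the density
        have h2 : normalPDF s b ≤ K * Real.exp (-(1 / (3 * v)) * b ^ 2) := by
          unfold normalPDF
          rw [hK]
          apply mul_le_mul
          · apply inv_anti₀ (by positivity)
            apply Real.sqrt_le_sqrt
            nlinarith [Real.pi_pos]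
          · rw [Real.exp_le_exp, neg_div, neg_mul]
            have heq : (1 / (3 * v)) * b ^ 2 = b ^ 2 / (3 * v) := by ring
            have hle := div_le_div_of_nonneg_left (sq_nonneg b)
              (by linarith : (0:ℝ) < 2 * s) (by linarith : 2 * s ≤ 3 * v)
            linarith
          · positivity
          · positivity
        have h3 : Real.exp (-(Λ * Real.exp b)) * normalPDF s b
            ≤ K * Real.exp (-(1 / (3 * v)) * b ^ 2) := by
          calc Real.exp (-(Λ * Real.exp b)) * normalPDF s b
              ≤ 1 * normalPDF s b := mul_le_mul_of_nonneg_right (hexple b) hψpos.le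
            _ = normalPDF s b := one_mul _
            _ ≤ K * Real.exp (-(1 / (3 * v)) * b ^ 2) := h2
        have hprod : |b ^ 2 / s ^ 2 - 1 / s| * (Real.exp (-(Λ * Real.exp b)) * normalPDF s b)
            ≤ bound b := by
          rw [hbound]
          exact mul_le_mul h1 h3 (by positivity) (by positivity)
        have hboundnn : 0 ≤ bound b := by
          rw [hbound]; positivity
        calc ‖F' s b‖ = (1 / 2) * (|b ^ 2 / s ^ 2 - 1 / s|
              * (Real.exp (-(Λ * Real.exp b)) * normalPDF s b)) := by
              rw [hF']
              rw [Real.norm_eq_abs, abs_mul, abs_mul,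
                abs_of_nonneg (by positivity : (0:ℝ) ≤ Real.exp (-(Λ * Real.exp b)) * normalPDF s b)]
              norm_num
          _ ≤ (1 / 2) * bound b := by linarith
          _ ≤ bound b := by linarith)
      (by
        have h1 : Integrable (fun x : ℝ => x ^ (2:ℝ) * Real.exp (-(1 / (3 * v)) * x ^ 2)) :=
          integrable_rpow_mul_exp_neg_mul_sq hc3 (by norm_num)
        have h1' : Integrable (fun x : ℝ => x ^ 2 * Real.exp (-(1 / (3 * v)) * x ^ 2)) := by
          refine h1.congr (Filter.Eventually.of_forall fun x => ?_)
          show x ^ (2:ℝ) * _ = _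
          rw [show (2:ℝ) = ((2:ℕ):ℝ) by norm_num, Real.rpow_natCast]
        have h2 : Integrable (fun x : ℝ => Real.exp (-(1 / (3 * v)) * x ^ 2)) :=
          integrable_exp_neg_mul_sq hc3
        have h3 : Integrable (fun b : ℝ =>
            (K * ((v / 2) ^ 2)⁻¹) * (b ^ 2 * Real.exp (-(1 / (3 * v)) * b ^ 2))
            + (K * (1 / (v / 2))) * Real.exp (-(1 / (3 * v)) * b ^ 2)) :=
          (h1'.const_mul _).add (h2.const_mul _)
        refine h3.congr (Filter.Eventually.of_forall fun b => ?_)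
        rw [hbound]; ring)
      (Filter.Eventually.of_forall fun b => by
        intro s hs
        obtain ⟨hs1, hs2⟩ := hball s hs
        have h0 : 0 < s := by linarith
        have := (hasDerivAt_normalPDF b h0).const_mul (Real.exp (-(Λ * Real.exp b)))
        refine this.congr_deriv ?_
        rw [hF']
        ring)
    obtain ⟨-, hder⟩ := key
    have heq2 : (∫ b, F' v b)
        = (1 / 2) * ∫ b, (b ^ 2 / v ^ 2 - 1 / v) * Real.exp (-(Λ * Real.exp b)) * normalPDF v b := by
      rw [← integral_const_mul]
      congr 1
      funext b
      rw [hF']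
      ring
    rwa [heq2] at hder
end
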